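/- Let S be a numerical semigroup with type t := t(S). Then |Star(S)| ≥ D(t − 1) − 1, where D(n) is the n-th Dedekind number. -/

import Mathlib

/-- A numerical semigroup: a subset of ℕ containing 0, closed under addition,
with finite complement. -/
structure NumSgp where
  carrier : Set ℕ
  zero_mem : 0 ∈ carrier
  add_mem : ∀ a ∈ carrier, ∀ b ∈ carrier, a + b ∈ carrier
  cofinite : carrierᶜ.Finite

/-- The copy of `S` inside ℤ. -/
def natS (S : NumSgp) : Set ℤ := (fun n : ℕ => (n : ℤ)) '' S.carrier

/-- A fractional ideal of `S`: a nonempty subset of ℤ, bounded below, with `I + S ⊆ I`. -/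
def IsFracIdeal (S : NumSgp) (I : Set ℤ) : Prop :=
  I.Nonempty ∧ BddBelow I ∧ ∀ i ∈ I, ∀ s ∈ natS S, i + s ∈ I

/-- `(I − J) = {x ∈ ℤ : x + J ⊆ I}`. -/
def idealSub (I J : Set ℤ) : Set ℤ := {x : ℤ | ∀ j ∈ J, x + j ∈ I}

/-- `F₀(S)`: fractional ideals `I` with `S ⊆ I ⊆ ℕ` (hence with minimal element 0). -/
def F0 (S : NumSgp) : Set (Set ℤ) :=
  {I | IsFracIdeal S I ∧ natS S ⊆ I ∧ I ⊆ {x : ℤ | 0 ≤ x}}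

/-- The `v`-operation (divisorial closure): `I ↦ (S − (S − I))`. -/
def vOp (S : NumSgp) (I : Set ℤ) : Set ℤ := idealSub (natS S) (idealSub (natS S) I)

/-- An ideal is divisorial if it is `v`-closed. -/
def Divisorial (S : NumSgp) (I : Set ℤ) : Prop := vOp S I = I

/-- `G₀(S)`: the nondivisorial ideals in `F₀(S)`. -/
def G0 (S : NumSgp) : Set (Set ℤ) := {I | I ∈ F0 S ∧ ¬ Divisorial S I}

/-- The action of the star operation `⋆_I` generated by `I`:
`J ↦ J^{⋆_I} = J^v ∩ (I − (I − J))`. -/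
def starI (S : NumSgp) (I J : Set ℤ) : Set ℤ := vOp S J ∩ idealSub I (idealSub I J)

/-- The action of the star operation `⋆_Δ = inf_{I ∈ Δ} ⋆_I` generated by a set `Δ` of ideals:
`J ↦ J^{⋆_Δ} = J^v ∩ ⋂_{I ∈ Δ} (I − (I − J))`. -/
def starD (S : NumSgp) (Δ : Set (Set ℤ)) (J : Set ℤ) : Set ℤ :=
  vOp S J ∩ ⋂ I ∈ Δ, idealSub I (idealSub I J)

/-- The ⋆-order: `I ≤⋆ J` iff `I` is `⋆_J`-closed. -/
def starle (S : NumSgp) (I J : Set ℤ) : Prop := starI S J I = I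

/-- A star operation on `S`, given by its action on subsets of ℤ; it is normalized to be
the identity outside the fractional ideals, so that two star operations are equal iff they
agree on all fractional ideals. -/
structure StarOp (S : NumSgp) where
  toFun : Set ℤ → Set ℤ
  isFrac : ∀ I, IsFracIdeal S I → IsFracIdeal S (toFun I)
  subset_star : ∀ I, IsFracIdeal S I → I ⊆ toFun I
  mono : ∀ I J, IsFracIdeal S I → IsFracIdeal S J → I ⊆ J → toFun I ⊆ toFun J
  idem : ∀ I, IsFracIdeal S I → toFun (toFun I) = toFun I
  transl : ∀ I, IsFracIdeal S I → ∀ a : ℤ,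
    toFun ((fun x => a + x) '' I) = (fun x => a + x) '' toFun I
  star_S : toFun (natS S) = natS S
  default_eq : ∀ I, ¬ IsFracIdeal S I → toFun I = I

/-- The order on star operations: `s ≤ t` iff `I^s ⊆ I^t` for every fractional ideal `I`. -/
def StarOp.le {S : NumSgp} (s t : StarOp S) : Prop :=
  ∀ I, IsFracIdeal S I → s.toFun I ⊆ t.toFun I

/-- A star operation `s` is prime if whenever `s ≥ t ∧ u` (the infimum of two star operations
being given by `I ↦ I^t ∩ I^u`), then `s ≥ t` or `s ≥ u`. -/
def StarOp.IsPrime {S : NumSgp} (s : StarOp S) : Prop :=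
  ∀ t u : StarOp S,
    (∀ I, IsFracIdeal S I → t.toFun I ∩ u.toFun I ⊆ s.toFun I) →
    t.le s ∨ u.le s

/-- `I ∈ F₀(S)` is an atom if the star operation `⋆_I` is prime. -/
def AtomIdeal (S : NumSgp) (I : Set ℤ) : Prop :=
  I ∈ F0 S ∧ ∀ t u : StarOp S,
    (∀ J, IsFracIdeal S J → t.toFun J ∩ u.toFun J ⊆ starI S I J) →
    (∀ J, IsFracIdeal S J → t.toFun J ⊆ starI S I J) ∨
    (∀ J, IsFracIdeal S J → u.toFun J ⊆ starI S I J)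

/-- `M_a = {x ∈ ℕ : a − x ∉ S}`, the biggest ideal in `F₀(S)` not containing `a`. -/
def Mdual (S : NumSgp) (a : ℕ) : Set ℤ := {x : ℤ | 0 ≤ x ∧ ((a : ℤ) - x) ∉ natS S}

/-- `Q_a(S) = {I ∈ F₀(S) : a = sup(ℕ \ I), a ∈ I^v}`. -/
def Qa (S : NumSgp) (a : ℕ) : Set (Set ℤ) :=
  {I | I ∈ F0 S ∧ (a : ℤ) ∉ I ∧ (∀ x : ℤ, (a : ℤ) < x → x ∈ I) ∧ (a : ℤ) ∈ vOp S I}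

/-- The number of antichains (with respect to inclusion) of a family of ideals. -/
noncomputable def numInclAnti (Q : Set (Set ℤ)) : ℕ :=
  Set.ncard {Δ : Set (Set ℤ) | Δ ⊆ Q ∧ IsAntichain (· ⊆ ·) Δ}

/-- The `n`-th Dedekind number: the number of antichains of the power set of an
`n`-element set, ordered by inclusion. -/
noncomputable def dedekind (n : ℕ) : ℕ :=
  Nat.card {A : Set (Set (Fin n)) // IsAntichain (· ⊆ ·) A}

/-- `T(S) = (S − M_S) \ S`. -/
def Tset (S : NumSgp) : Set ℤ :=
  idealSub (natS S) ((fun n : ℕ => (n : ℤ)) '' (S.carrier \ {0})) \ natS S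

/-- The type `t(S) = |T(S)|`. -/
noncomputable def typeNum (S : NumSgp) : ℕ := (Tset S).ncard

/-- The Frobenius number `g(S)`: the largest integer not in `S`. -/
noncomputable def frob (S : NumSgp) : ℕ := sSup S.carrierᶜ

/-- The multiplicity `μ(S)`: the smallest nonzero element of `S`. -/
noncomputable def multNum (S : NumSgp) : ℕ := sInf (S.carrier \ {0})

/-- The degree of singularity `δ(S) = |ℕ \ S|`. -/
noncomputable def deltaNum (S : NumSgp) : ℕ := S.carrierᶜ.ncard

/-- `S` is symmetric if `g(S) − a ∈ S` for every `a ∈ ℕ \ S`. -/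
def IsSymmetricSgp (S : NumSgp) : Prop :=
  ∀ a : ℕ, a ∉ S.carrier → ((frob S : ℤ) - (a : ℤ)) ∈ natS S

section Basics

lemma natS_cast {S : NumSgp} {m : ℕ} : (m : ℤ) ∈ natS S ↔ m ∈ S.carrier := by
  constructor
  · rintro ⟨n, hn, he⟩
    have he' : (n : ℤ) = (m : ℤ) := he
    have : n = m := by exact_mod_cast he'
    rwa [this] at hn
  · exact fun h => ⟨m, h, rfl⟩

lemma natS_nonneg {S : NumSgp} {x : ℤ} (h : x ∈ natS S) : 0 ≤ x := by
  rcases h with ⟨n, _, rfl⟩; exact Int.ofNat_nonneg n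

lemma natS_zero (S : NumSgp) : (0 : ℤ) ∈ natS S := ⟨0, S.zero_mem, rfl⟩

lemma natS_add {S : NumSgp} {x y : ℤ} (hx : x ∈ natS S) (hy : y ∈ natS S) :
    x + y ∈ natS S := by
  rcases hx with ⟨m, hm, rfl⟩; rcases hy with ⟨n, hn, rfl⟩
  exact ⟨m + n, S.add_mem m hm n hn, by push_cast; ring⟩

lemma mem_of_frob_lt {S : NumSgp} {m : ℕ} (h : frob S < m) : m ∈ S.carrier := by
  by_contra hm
  exact absurd (le_csSup S.cofinite.bddAbove hm) (not_le.mpr h)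

lemma natS_of_frob_lt {S : NumSgp} {x : ℤ} (h : (frob S : ℤ) < x) : x ∈ natS S := by
  have hx : 0 ≤ x := le_trans (Int.ofNat_nonneg _) (le_of_lt h)
  obtain ⟨m, rfl⟩ := Int.eq_ofNat_of_zero_le hx
  exact natS_cast.mpr (mem_of_frob_lt (by exact_mod_cast h))

lemma mem_idealSub {I J : Set ℤ} {x : ℤ} : x ∈ idealSub I J ↔ ∀ j ∈ J, x + j ∈ I := Iff.rfl

lemma idealSub_anti {I J J' : Set ℤ} (h : J ⊆ J') : idealSub I J' ⊆ idealSub I J :=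
  fun _ hx j hj => hx j (h hj)

lemma subset_idealSub_double {I J : Set ℤ} : J ⊆ idealSub I (idealSub I J) :=
  fun j hj x hx => by rw [add_comm]; exact hx j hj

lemma idealSub_triple {I J : Set ℤ} :
    idealSub I (idealSub I (idealSub I J)) = idealSub I J :=
  subset_antisymm (idealSub_anti subset_idealSub_double) subset_idealSub_double

lemma mem_starD {S : NumSgp} {Δ : Set (Set ℤ)} {J : Set ℤ} {x : ℤ} :
    x ∈ starD S Δ J ↔ x ∈ vOp S J ∧ ∀ I ∈ Δ, x ∈ idealSub I (idealSub I J) := by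
  simp [starD, Set.mem_iInter]

lemma subset_starD {S : NumSgp} {Δ : Set (Set ℤ)} {J : Set ℤ} : J ⊆ starD S Δ J :=
  fun _ hj => mem_starD.mpr ⟨subset_idealSub_double hj, fun _ _ => subset_idealSub_double hj⟩

lemma starD_mono {S : NumSgp} {Δ : Set (Set ℤ)} {J J' : Set ℤ} (h : J ⊆ J') :
    starD S Δ J ⊆ starD S Δ J' := by
  intro x hx
  rcases mem_starD.mp hx with ⟨hv, hp⟩
  exact mem_starD.mpr ⟨idealSub_anti (idealSub_anti h) hv,
    fun I hI => idealSub_anti (idealSub_anti h) (hp I hI)⟩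

lemma starD_idem {S : NumSgp} {Δ : Set (Set ℤ)} {J : Set ℤ} :
    starD S Δ (starD S Δ J) = starD S Δ J := by
  apply subset_antisymm _ subset_starD
  intro x hx
  rcases mem_starD.mp hx with ⟨hv, hp⟩
  refine mem_starD.mpr ⟨?_, ?_⟩
  · have h1 : starD S Δ J ⊆ vOp S J := Set.inter_subset_left
    have h2 : vOp S (starD S Δ J) ⊆ vOp S (vOp S J) := idealSub_anti (idealSub_anti h1)
    have h3 : vOp S (vOp S J) = vOp S J := idealSub_triple
    exact h3 ▸ (h2 hv)
  · intro I hI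
    have h1 : starD S Δ J ⊆ idealSub I (idealSub I J) :=
      fun y hy => (mem_starD.mp hy).2 I hI
    have h2 : idealSub I (idealSub I (starD S Δ J)) ⊆
        idealSub I (idealSub I (idealSub I (idealSub I J))) :=
      idealSub_anti (idealSub_anti h1)
    have h3 : idealSub I (idealSub I (idealSub I (idealSub I J))) = idealSub I (idealSub I J) :=
      idealSub_triple
    exact h3 ▸ (h2 (hp I hI))

lemma frac_natS (S : NumSgp) : IsFracIdeal S (natS S) :=
  ⟨⟨0, natS_zero S⟩, ⟨0, fun _ hx => natS_nonneg hx⟩, fun _ hi _ hs => natS_add hi hs⟩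

lemma frac_translate {S : NumSgp} {I : Set ℤ} (h : IsFracIdeal S I) (a : ℤ) :
    IsFracIdeal S ((fun x => a + x) '' I) := by
  obtain ⟨⟨x0, hx0⟩, ⟨b, hb⟩, hcl⟩ := h
  refine ⟨⟨a + x0, ⟨x0, hx0, rfl⟩⟩, ⟨a + b, ?_⟩, ?_⟩
  · rintro y ⟨x, hx, rfl⟩; exact (add_le_add_iff_left a).mpr (hb hx)
  · rintro i ⟨x, hx, rfl⟩ s hs; exact ⟨x + s, hcl x hx s hs, by ring⟩

lemma frac_starD {S : NumSgp} {Δ : Set (Set ℤ)} {J : Set ℤ}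
    (hΔ : ∀ I ∈ Δ, ∀ x ∈ I, ∀ s ∈ natS S, x + s ∈ I) (hJ : IsFracIdeal S J) :
    IsFracIdeal S (starD S Δ J) := by
  obtain ⟨hne, ⟨b, hb⟩, _⟩ := hJ
  refine ⟨hne.mono subset_starD, ?_, ?_⟩
  · have hx0 : ((frob S : ℤ) + 1 - b) ∈ idealSub (natS S) J := by
      intro j hj
      apply natS_of_frob_lt
      have := hb hj; linarith
    refine ⟨-((frob S : ℤ) + 1 - b), ?_⟩
    intro y hy
    have h1 : y + ((frob S : ℤ) + 1 - b) ∈ natS S := (mem_starD.mp hy).1 _ hx0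
    have := natS_nonneg h1; linarith
  · intro i hi s hs
    rcases mem_starD.mp hi with ⟨hv, hp⟩
    refine mem_starD.mpr ⟨?_, ?_⟩
    · intro x hx
      rw [add_right_comm]
      exact natS_add (hv x hx) hs
    · intro I hI x hx
      rw [add_right_comm]
      exact hΔ I hI _ (hp I hI x hx) s hs

lemma vOp_natS (S : NumSgp) : vOp S (natS S) = natS S := by
  apply subset_antisymm _ subset_idealSub_double
  intro x hx
  have h0 : (0 : ℤ) ∈ idealSub (natS S) (natS S) := fun j hj => by simpa using hj
  simpa using hx 0 h0

lemma starD_natS (S : NumSgp) (Δ : Set (Set ℤ)) : starD S Δ (natS S) = natS S := by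
  apply subset_antisymm _ subset_starD
  intro x hx
  have := (mem_starD.mp hx).1
  rwa [show vOp S (natS S) = natS S from vOp_natS S] at this

lemma mem_idealSub_image {I J : Set ℤ} {a x : ℤ} :
    x ∈ idealSub I ((fun y => a + y) '' J) ↔ x + a ∈ idealSub I J := by
  constructor
  · intro h j hj
    have := h (a + j) ⟨j, hj, rfl⟩
    rwa [show x + (a + j) = x + a + j by ring] at this
  · rintro h y ⟨j, hj, rfl⟩
    have := h j hj
    rwa [show x + a + j = x + (a + j) by ring] at this

lemma idealSub_idealSub_image {I J : Set ℤ} {a x : ℤ} :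
    x ∈ idealSub I (idealSub I ((fun y => a + y) '' J)) ↔
      x - a ∈ idealSub I (idealSub I J) := by
  constructor
  · intro h z hz
    have hz' : (z - a) ∈ idealSub I ((fun y => a + y) '' J) :=
      mem_idealSub_image.mpr (by simpa using hz)
    have := h (z - a) hz'
    rwa [show x + (z - a) = x - a + z by ring] at this
  · intro h w hw
    have hw' : w + a ∈ idealSub I J := mem_idealSub_image.mp hw
    have := h (w + a) hw'
    rwa [show x - a + (w + a) = x + w by ring] at this

lemma starD_image {S : NumSgp} {Δ : Set (Set ℤ)} {J : Set ℤ} {a : ℤ} :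
    starD S Δ ((fun y => a + y) '' J) = (fun y => a + y) '' starD S Δ J := by
  ext x
  constructor
  · intro hx
    rcases mem_starD.mp hx with ⟨hv, hp⟩
    refine ⟨x - a, mem_starD.mpr ⟨idealSub_idealSub_image.mp hv,
      fun I hI => idealSub_idealSub_image.mp (hp I hI)⟩, by ring⟩
  · rintro ⟨y, hy, rfl⟩
    rcases mem_starD.mp hy with ⟨hv, hp⟩
    have hya : a + y - a = y := by ring
    refine mem_starD.mpr ⟨idealSub_idealSub_image.mpr (by rwa [hya]), ?_⟩
    intro I hI
    exact idealSub_idealSub_image.mpr (by rw [hya]; exact hp I hI)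

open Classical in
/-- The star operation generated by a family `Δ` of ideals. -/
noncomputable def mkStar (S : NumSgp) (Δ : Set (Set ℤ))
    (hΔ : ∀ I ∈ Δ, ∀ x ∈ I, ∀ s ∈ natS S, x + s ∈ I) : StarOp S where
  toFun J := if IsFracIdeal S J then starD S Δ J else J
  isFrac J hJ := by rw [if_pos hJ]; exact frac_starD hΔ hJ
  subset_star J hJ := by rw [if_pos hJ]; exact subset_starD
  mono I J hI hJ h := by rw [if_pos hI, if_pos hJ]; exact starD_mono h
  idem J hJ := by rw [if_pos hJ, if_pos (frac_starD hΔ hJ)]; exact starD_idem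
  transl J hJ a := by
    rw [if_pos (frac_translate hJ a), if_pos hJ]; exact starD_image
  star_S := by rw [if_pos (frac_natS S)]; exact starD_natS S Δ
  default_eq J hJ := if_neg hJ

open Classical in
lemma mkStar_toFun (S : NumSgp) (Δ : Set (Set ℤ))
    (hΔ : ∀ I ∈ Δ, ∀ x ∈ I, ∀ s ∈ natS S, x + s ∈ I) (J : Set ℤ) :
    (mkStar S Δ hΔ).toFun J = if IsFracIdeal S J then starD S Δ J else J := rfl

lemma StarOp.ext' {S : NumSgp} {s t : StarOp S} (h : s.toFun = t.toFun) : s = t := by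
  cases s; cases t; cases h; rfl

end Basics
section Finiteness

lemma toFun_subset_union {S : NumSgp} (s : StarOp S) {I : Set ℤ} (hI : I ∈ F0 S) :
    s.toFun I ⊆ natS S ∪ (s.toFun I ∩ Set.Icc (-(frob S : ℤ) - 1) (frob S : ℤ)) := by
  obtain ⟨hfrac, hsub, hpos⟩ := hI
  set a : ℤ := -(frob S : ℤ) - 1 with ha
  have hIU : I ⊆ (fun y => a + y) '' natS S := by
    intro y hy
    refine ⟨y - a, natS_of_frob_lt ?_, by ring⟩
    have : (0 : ℤ) ≤ y := hpos hy
    rw [ha]; linarith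
  have hU : s.toFun I ⊆ (fun y => a + y) '' natS S := by
    have h1 := s.mono I _ hfrac (frac_translate (frac_natS S) a) hIU
    rw [s.transl _ (frac_natS S) a, s.star_S] at h1
    exact h1
  intro x hx
  by_cases hxS : x ∈ natS S
  · exact Or.inl hxS
  · refine Or.inr ⟨hx, ?_, ?_⟩
    · rcases hU hx with ⟨n, hn, hxn⟩
      have hxn' : a + n = x := hxn
      have h0 := natS_nonneg hn
      linarith
    · by_contra hgt
      push_neg at hgt
      exact hxS (natS_of_frob_lt hgt)

lemma toFun_eq_union {S : NumSgp} (s : StarOp S) {I : Set ℤ} (hI : I ∈ F0 S) :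
    s.toFun I = natS S ∪ (s.toFun I ∩ Set.Icc (-(frob S : ℤ) - 1) (frob S : ℤ)) := by
  apply subset_antisymm (toFun_subset_union s hI)
  rintro x (hx | hx)
  · exact s.subset_star I hI.1 (hI.2.1 hx)
  · exact hx.1

lemma F0_eq_union {S : NumSgp} {I : Set ℤ} (hI : I ∈ F0 S) :
    I = natS S ∪ (I ∩ Set.Icc (0 : ℤ) (frob S : ℤ)) := by
  apply subset_antisymm
  · intro x hx
    by_cases hxS : x ∈ natS S
    · exact Or.inl hxS
    · refine Or.inr ⟨hx, hI.2.2 hx, ?_⟩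
      by_contra hgt
      push_neg at hgt
      exact hxS (natS_of_frob_lt hgt)
  · rintro x (hx | hx)
    · exact hI.2.1 hx
    · exact hx.1

lemma F0_finite (S : NumSgp) : (F0 S).Finite := by
  have hinj : Set.InjOn (fun I : Set ℤ => I ∩ Set.Icc (0 : ℤ) (frob S : ℤ)) (F0 S) := by
    intro I hI J hJ h
    rw [F0_eq_union hI, F0_eq_union hJ]
    dsimp only at h
    rw [h]
  apply Set.Finite.of_finite_image _ hinj
  apply Set.Finite.subset ((Set.finite_Icc (0 : ℤ) (frob S : ℤ)).finite_subsets)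
  rintro X ⟨I, _, rfl⟩
  exact Set.inter_subset_right

lemma starOp_finite (S : NumSgp) : Finite (StarOp S) := by
  haveI : Finite ↥(F0 S) := (F0_finite S).to_subtype
  haveI : Finite ↥(Set.Icc (-(frob S : ℤ) - 1) (frob S : ℤ)) :=
    (Set.finite_Icc _ _).to_subtype
  set K : Set ℤ := Set.Icc (-(frob S : ℤ) - 1) (frob S : ℤ) with hK
  apply Finite.of_injective
    (fun (s : StarOp S) (I : ↥(F0 S)) => ({x : ↥K | (x : ℤ) ∈ s.toFun I} : Set ↥K))
  intro s t h
  apply StarOp.ext'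
  have key : ∀ I ∈ F0 S, s.toFun I = t.toFun I := by
    intro I hI
    have h1 := congrFun h ⟨I, hI⟩
    have h2 : s.toFun I ∩ K = t.toFun I ∩ K := by
      ext x
      constructor
      · rintro ⟨hx, hxK⟩
        have := (Set.ext_iff.mp h1 ⟨x, hxK⟩).mp hx
        exact ⟨this, hxK⟩
      · rintro ⟨hx, hxK⟩
        have := (Set.ext_iff.mp h1 ⟨x, hxK⟩).mpr hx
        exact ⟨this, hxK⟩
    rw [toFun_eq_union s hI, toFun_eq_union t hI, h2]
  have key2 : ∀ I, IsFracIdeal S I → s.toFun I = t.toFun I := by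
    intro I hI
    obtain ⟨b, hb⟩ := hI.2.1
    obtain ⟨m, hmI, hmin⟩ :=
      Int.exists_least_of_bdd (P := fun z => z ∈ I) ⟨b, fun z hz => hb hz⟩ hI.1
    have hI0frac : IsFracIdeal S ((fun x => -m + x) '' I) := frac_translate hI (-m)
    have hF0 : (fun x => -m + x) '' I ∈ F0 S := by
      refine ⟨hI0frac, ?_, ?_⟩
      · intro y hy
        have h0 : (0 : ℤ) ∈ (fun x => -m + x) '' I := ⟨m, hmI, by ring⟩
        have := hI0frac.2.2 0 h0 y hy
        simpa using this
      · rintro y ⟨x, hx, rfl⟩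
        have := hmin x hx
        simp only [Set.mem_setOf_eq]
        linarith
    have hIeq : I = (fun x => m + x) '' ((fun x => -m + x) '' I) := by
      ext x
      constructor
      · intro hx; exact ⟨-m + x, ⟨x, hx, rfl⟩, by ring⟩
      · rintro ⟨y, ⟨z, hz, rfl⟩, rfl⟩
        simpa using hz
    rw [hIeq, s.transl _ hI0frac m, t.transl _ hI0frac m, key _ hF0]
  funext I
  by_cases hI : IsFracIdeal S I
  · exact key2 I hI
  · rw [s.default_eq I hI, t.default_eq I hI]

end Finiteness
section TsetLemmas

/-- `S ∪ A` for a set `A` of pseudo-Frobenius-type elements. -/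
def Jset (S : NumSgp) (A : Set ℤ) : Set ℤ := natS S ∪ A

lemma Tset_not_natS {S : NumSgp} {τ : ℤ} (h : τ ∈ Tset S) : τ ∉ natS S := h.2

lemma Tset_add {S : NumSgp} {τ : ℤ} (h : τ ∈ Tset S) {s : ℤ} (hs : s ∈ natS S)
    (hs0 : s ≠ 0) : τ + s ∈ natS S := by
  rcases hs with ⟨n, hn, rfl⟩
  refine h.1 _ ⟨n, ⟨hn, fun h0 => hs0 ?_⟩, rfl⟩
  rw [Set.mem_singleton_iff] at h0
  simp [h0]

lemma Jset_ideal {S : NumSgp} {A : Set ℤ} (hA : A ⊆ Tset S) :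
    ∀ x ∈ Jset S A, ∀ s ∈ natS S, x + s ∈ Jset S A := by
  rintro x (hx | hx) s hs
  · exact Or.inl (natS_add hx hs)
  · by_cases h0 : s = 0
    · rw [h0, add_zero]; exact Or.inr hx
    · exact Or.inl (Tset_add (hA hx) hs h0)

lemma Jset_frac {S : NumSgp} {A : Set ℤ} (hA : A ⊆ Tset S) (h0 : ∀ τ ∈ A, (0:ℤ) ≤ τ) :
    IsFracIdeal S (Jset S A) := by
  refine ⟨⟨0, Or.inl (natS_zero S)⟩, ⟨0, ?_⟩, Jset_ideal hA⟩
  rintro x (hx | hx)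
  · exact natS_nonneg hx
  · exact h0 x hx

lemma Tset_pos {S : NumSgp} (hS : S.carrier ≠ Set.univ) {τ : ℤ} (hτ : τ ∈ Tset S) :
    0 < τ := by
  rcases lt_trichotomy 0 τ with h | h | h
  · exact h
  · exact absurd (h ▸ natS_zero S) hτ.2
  · exfalso
    apply hS
    set d := (-τ).toNat with hd
    have hdτ : (d : ℤ) = -τ := Int.toNat_of_nonneg (by linarith)
    have hd1 : 1 ≤ d := by omega
    have step : ∀ k : ℕ, ∀ m : ℕ, 1 ≤ m → m + k * d ∈ S.carrier → m ∈ S.carrier := by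
      intro k
      induction k with
      | zero => intro m _ hmem; simpa using hmem
      | succ k ih =>
        intro m hm hmem
        apply ih m hm
        have hne : m + (k + 1) * d ≠ 0 := by omega
        have h1 : τ + ((m + (k + 1) * d : ℕ) : ℤ) ∈ natS S :=
          hτ.1 _ ⟨m + (k + 1) * d, ⟨hmem, hne⟩, rfl⟩
        have h2 : ((m + k * d : ℕ) : ℤ) = τ + ((m + (k + 1) * d : ℕ) : ℤ) := by
          push_cast
          rw [show τ = -(d:ℤ) by linarith]
          ring
        rw [← h2] at h1
        exact natS_cast.mp h1
    rw [Set.eq_univ_iff_forall]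
    intro m
    rcases Nat.eq_zero_or_pos m with rfl | hm
    · exact S.zero_mem
    · apply step (frob S + 1) m hm
      apply mem_of_frob_lt
      have : frob S + 1 ≤ (frob S + 1) * d := Nat.le_mul_of_pos_right _ hd1
      omega

lemma Tset_finite (S : NumSgp) : (Tset S).Finite := by
  apply Set.Finite.subset (Set.finite_Icc (-(frob S : ℤ) - 1) (frob S : ℤ))
  intro τ hτ
  constructor
  · have h1 : τ + ((frob S + 1 : ℕ) : ℤ) ∈ natS S := by
      apply hτ.1
      exact ⟨frob S + 1, ⟨mem_of_frob_lt (Nat.lt_succ_self _), by simp⟩, rfl⟩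
    have h2 := natS_nonneg h1
    push_cast at h2
    linarith
  · by_contra h
    push_neg at h
    exact hτ.2 (natS_of_frob_lt h)

lemma natS_univ {S : NumSgp} (hu : S.carrier = Set.univ) {x : ℤ} :
    x ∈ natS S ↔ 0 ≤ x := by
  constructor
  · exact natS_nonneg
  · intro hx
    obtain ⟨m, rfl⟩ := Int.eq_ofNat_of_zero_le hx
    exact natS_cast.mpr (by rw [hu]; trivial)

lemma carrier_ne_univ_of_type {S : NumSgp} (h : 2 ≤ typeNum S) :
    S.carrier ≠ Set.univ := by
  intro hu
  have hT : Tset S = {(-1 : ℤ)} := by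
    ext τ
    simp only [Set.mem_singleton_iff]
    constructor
    · rintro ⟨h1, h2⟩
      have hτ1 : τ + 1 ∈ natS S := h1 1 ⟨1, ⟨by rw [hu]; trivial, one_ne_zero⟩, rfl⟩
      have hτ1' := (natS_univ hu).mp hτ1
      have hτ2 : ¬ (0 ≤ τ) := fun hc => h2 ((natS_univ hu).mpr hc)
      omega
    · rintro rfl
      constructor
      · rintro j ⟨n, ⟨_, hn0⟩, rfl⟩
        apply (natS_univ hu).mpr
        rw [Set.mem_singleton_iff] at hn0
        show (0:ℤ) ≤ -1 + (n : ℤ)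
        omega
      · intro hc
        have := natS_nonneg hc
        omega
  rw [typeNum, hT] at h
  simp at h

lemma frob_not_natS {S : NumSgp} (hS : S.carrier ≠ Set.univ) :
    ((frob S : ℤ)) ∉ natS S := by
  intro h
  have hne : S.carrierᶜ.Nonempty := Set.nonempty_compl.mpr hS
  have hmem : frob S ∈ S.carrierᶜ := Nat.sSup_mem hne S.cofinite.bddAbove
  exact hmem (natS_cast.mp h)

lemma natS_one_le {S : NumSgp} {x : ℤ} (hx : x ∈ natS S) (h0 : x ≠ 0) : 1 ≤ x := by
  rcases hx with ⟨n, _, hxn⟩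
  have : (n : ℤ) = x := hxn
  omega

lemma g_mem_vOp {S : NumSgp} {A : Set ℤ} (hA : A ⊆ Tset S) (hAne : A.Nonempty) :
    (frob S : ℤ) ∈ vOp S (Jset S A) := by
  intro x hx
  have hxS : x ∈ natS S := by simpa using hx 0 (Or.inl (natS_zero S))
  have hx0 : x ≠ 0 := by
    rintro rfl
    obtain ⟨a, ha⟩ := hAne
    have h1 : a ∈ natS S := by simpa using hx a (Or.inr ha)
    exact (hA ha).2 h1
  exact natS_of_frob_lt (by have := natS_one_le hxS hx0; linarith)

lemma g_not_mem_part {S : NumSgp} (hS : S.carrier ≠ Set.univ) {A : Set ℤ}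
    (hA : A ⊆ Tset S) (hAg : (frob S : ℤ) ∉ A) :
    (frob S : ℤ) ∉ idealSub (Jset S A) (idealSub (Jset S A) (Jset S A)) := by
  intro h
  have h0 : (0 : ℤ) ∈ idealSub (Jset S A) (Jset S A) := fun j hj => by simpa using hj
  have h1 : (frob S : ℤ) ∈ Jset S A := by simpa using h 0 h0
  rcases h1 with h1 | h1
  · exact frob_not_natS hS h1
  · exact hAg h1

lemma g_mem_part {S : NumSgp} (hS : S.carrier ≠ Set.univ) {A B : Set ℤ}
    (hA : A ⊆ Tset S) (hB : B ⊆ Tset S) (hnot : ¬ A ⊆ B) :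
    (frob S : ℤ) ∈ idealSub (Jset S B) (idealSub (Jset S B) (Jset S A)) := by
  intro x hx
  have hxJB : x ∈ Jset S B := by simpa using hx 0 (Or.inl (natS_zero S))
  rcases hxJB with hxS | hxB
  · have hx0 : x ≠ 0 := by
      rintro rfl
      apply hnot
      intro a ha
      have h1 : a ∈ Jset S B := by simpa using hx a (Or.inr ha)
      rcases h1 with h1 | h1
      · exact absurd h1 (hA ha).2
      · exact h1
    exact Or.inl (natS_of_frob_lt (by have := natS_one_le hxS hx0; linarith))
  · have := Tset_pos hS (hB hxB)
    exact Or.inl (natS_of_frob_lt (by linarith))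

/-- The star operation attached to an antichain of subsets, via the ideals `S ∪ e''B`. -/
noncomputable def starOfB (S : NumSgp) {k : ℕ} (e : Fin k → ℤ) (he : ∀ i, e i ∈ Tset S)
    (ℬ : Set (Set (Fin k))) : StarOp S :=
  mkStar S ((fun B => Jset S (e '' B)) '' ℬ) (by
    rintro I ⟨B, _, rfl⟩
    exact Jset_ideal (by rintro a ⟨i, _, rfl⟩; exact he i))

lemma starOfB_toFun (S : NumSgp) {k : ℕ} (e : Fin k → ℤ) (he : ∀ i, e i ∈ Tset S)
    (ℬ : Set (Set (Fin k))) {J : Set ℤ} (hJ : IsFracIdeal S J) :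
    (starOfB S e he ℬ).toFun J = starD S ((fun B => Jset S (e '' B)) '' ℬ) J := by
  rw [starOfB, mkStar_toFun, if_pos hJ]

end TsetLemmas
/-- `|Star(S)| ≥ D(t(S) − 1) − 1`, where `D` is the Dedekind number function. -/
theorem card_star_ge_dedekind (S : NumSgp) :
    dedekind (typeNum S - 1) - 1 ≤ Nat.card (StarOp S) := by
  classical
  haveI : Finite (StarOp S) := starOp_finite S
  set n := typeNum S - 1 with hn
  set A' : Set (Set (Set (Fin n))) := {A | IsAntichain (· ⊆ ·) A ∧ ∅ ∉ A} with hA'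
  have hcard : dedekind n = A'.ncard + 1 := by
    have h1 : dedekind n = ({A : Set (Set (Fin n)) | IsAntichain (· ⊆ ·) A}).ncard := by
      rw [dedekind, ← Nat.card_coe_set_eq]
      exact Nat.card_congr (Equiv.subtypeEquivRight (fun A => Iff.rfl))
    have h2 : {A : Set (Set (Fin n)) | IsAntichain (· ⊆ ·) A} =
        insert ({∅} : Set (Set (Fin n))) A' := by
      ext A
      simp only [Set.mem_insert_iff, Set.mem_setOf_eq, hA']
      constructor
      · intro h
        by_cases h0 : ∅ ∈ A
        · left
          ext B
          simp only [Set.mem_singleton_iff]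
          constructor
          · intro hB
            by_contra hne
            exact h h0 hB (Ne.symm hne) (Set.empty_subset B)
          · rintro rfl; exact h0
        · right; exact ⟨h, h0⟩
      · rintro (rfl | ⟨h, _⟩)
        · intro a ha b hb hne
          rw [Set.mem_singleton_iff] at ha hb
          exact absurd (ha.trans hb.symm) hne
        · exact h
    rw [h1, h2, Set.ncard_insert_of_notMem (fun hc => hc.2 rfl) (Set.toFinite _)]
  have hTfin := Tset_finite S
  have htype : typeNum S = (Tset S).ncard := rfl
  have hT' : n ≤ (Tset S \ {(frob S : ℤ)}).ncard := by
    by_cases hg : (frob S : ℤ) ∈ Tset S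
    · rw [Set.ncard_diff_singleton_of_mem hg]
      omega
    · rw [Set.diff_singleton_eq_self hg]
      omega
  obtain ⟨e, heT₀, einj⟩ : ∃ e : Fin n → ℤ,
      (∀ i, e i ∈ Tset S \ {(frob S : ℤ)}) ∧ Function.Injective e := by
    obtain ⟨T₀, hT₀sub, hT₀card⟩ := Set.exists_subset_card_eq hT'
    have hT₀fin : T₀.Finite := (hTfin.subset Set.diff_subset).subset hT₀sub
    have hT₀card' : hT₀fin.toFinset.card = n := by
      rw [← Set.ncard_eq_toFinset_card _ hT₀fin, hT₀card]
    refine ⟨fun i => ((hT₀fin.toFinset.equivFinOfCardEq hT₀card').symm i).1,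
      fun i => ?_, fun i j hij => ?_⟩
    · apply hT₀sub
      have := ((hT₀fin.toFinset.equivFinOfCardEq hT₀card').symm i).2
      rwa [Set.Finite.mem_toFinset] at this
    · exact (Equiv.injective _) (Subtype.ext hij)
  have heT : ∀ i, e i ∈ Tset S := fun i => (heT₀ i).1
  let F : ↥A' → StarOp S := fun X => starOfB S e heT X.1
  have hFinj : Function.Injective F := by
    have key : ∀ X Y : ↥A', (∃ B ∈ X.1, ∀ C ∈ Y.1, ¬ B ⊆ C) → F X ≠ F Y := by
      rintro X Y ⟨B, hBX, hBnot⟩ heq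
      have hBne : B.Nonempty := Set.nonempty_iff_ne_empty.mpr (fun h => X.2.2 (h ▸ hBX))
      have hSne : S.carrier ≠ Set.univ := by
        apply carrier_ne_univ_of_type
        obtain ⟨i, _⟩ := hBne
        have h1 : 0 < n := i.pos
        omega
      set A0 : Set ℤ := e '' B with hA0
      have hA0sub : A0 ⊆ Tset S := by rintro a ⟨i, _, rfl⟩; exact heT i
      have hA0g : (frob S : ℤ) ∉ A0 := by
        rintro ⟨i, _, hi⟩
        exact (heT₀ i).2 (Set.mem_singleton_iff.mpr hi)
      have hA0ne : A0.Nonempty := hBne.image e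
      have hfrac : IsFracIdeal S (Jset S A0) :=
        Jset_frac hA0sub (fun τ hτ => le_of_lt (Tset_pos hSne (hA0sub hτ)))
      have hgX : (frob S : ℤ) ∉ (F X).toFun (Jset S A0) := by
        rw [show F X = starOfB S e heT X.1 from rfl, starOfB_toFun S e heT _ hfrac]
        intro hg
        have := (mem_starD.mp hg).2 (Jset S A0) ⟨B, hBX, rfl⟩
        exact g_not_mem_part hSne hA0sub hA0g this
      have hgY : (frob S : ℤ) ∈ (F Y).toFun (Jset S A0) := by
        rw [show F Y = starOfB S e heT Y.1 from rfl, starOfB_toFun S e heT _ hfrac]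
        refine mem_starD.mpr ⟨g_mem_vOp hA0sub hA0ne, ?_⟩
        rintro I ⟨C, hCY, rfl⟩
        apply g_mem_part hSne hA0sub (by rintro a ⟨i, _, rfl⟩; exact heT i)
        intro hsub
        apply hBnot C hCY
        intro i hi
        obtain ⟨j, hj, hji⟩ := hsub ⟨i, hi, rfl⟩
        rwa [← einj hji]
      rw [heq] at hgX
      exact hgX hgY
    intro X Y heq
    by_contra hne
    have hne' : X.1 ≠ Y.1 := fun h => hne (Subtype.ext h)
    have hdir : ∀ (U V : ↥A'), (∀ B ∈ U.1, ∃ C ∈ V.1, B ⊆ C) →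
        (∀ B ∈ V.1, ∃ C ∈ U.1, B ⊆ C) → U.1 ⊆ V.1 := by
      intro U V hUV hVU B hB
      obtain ⟨C, hC, hBC⟩ := hUV B hB
      obtain ⟨B', hB', hCB'⟩ := hVU C hC
      have hBB' : B ⊆ B' := hBC.trans hCB'
      have hBeq : B = B' := by
        by_contra hne2
        exact U.2.1 hB hB' hne2 hBB'
      have hBCeq : B = C := subset_antisymm hBC (hBeq ▸ hCB')
      rwa [hBCeq]
    rcases em (∃ B ∈ X.1, ∀ C ∈ Y.1, ¬ B ⊆ C) with hex | hnex
    · exact key X Y hex heq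
    rcases em (∃ B ∈ Y.1, ∀ C ∈ X.1, ¬ B ⊆ C) with hex2 | hnex2
    · exact key Y X hex2 heq.symm
    push_neg at hnex hnex2
    exact hne' (subset_antisymm (hdir X Y hnex hnex2) (hdir Y X hnex2 hnex))
  have hle := Nat.card_le_card_of_injective F hFinj
  rw [Nat.card_coe_set_eq] at hle
  omega
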